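/- Let ℓ > 0, ν ∈ S¹, Q*_ν = {x ∈ ℝ² : |x·ν| ≤ ℓ, |x·ν^⊥| ≤ ℓ/2}, Q_ν = {x : |x·ν| ≤ ℓ/2, |x·ν^⊥| ≤ ℓ/2}, and u ∈ W^{1,1}(Q*_ν; ℝ). Set η = ∫_{Q*_ν} (|∂_{ν^⊥} u| + (∂_ν u)_−) dx. Then there exists a nondecreasing function h : ℝ → ℝ such that ∫_{Q_ν} |u(x) − h(x·ν)|² dx ≤ C η |Du|(Q*_ν), and moreover ‖h(x·ν) − h̄‖_{L^∞(Q_ν)} ≤ (1/ℓ)|Du|(Q*_ν) for some constant h̄ ∈ ℝ. -/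

import Mathlib

/-!
Write `v(t, s) = u(t ν + s ν^⊥)`. In these coordinates `Q*_ν = [-ℓ, ℓ] × J` and `Q_ν = J × J`
with `J = [-ℓ/2, ℓ/2]`. Along a horizontal line, `v` plus the negative part of `∂ₜ v` accumulated
from the left edge is nondecreasing in `t`; its average over the lines `s ∈ J` is the profile `h`,
whose total increase is at most `ℓ⁻¹ ∫ (∂ₜ v)₊`. This gives monotonicity and the `L^∞` bound.

The deviation `|v(t, s) - h(t)|` is controlled in two ways: by the vertical variation
`V(t) = ∫_J |∂ₛ v(t, ·)|` plus `ℓ⁻¹ ∫ (∂ₜ v)₋`, and by the negative variation `A(s)` of the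
horizontal line through `(t, s)` plus `O(ℓ⁻¹ ∫ |Dv|)`, comparing `(t, s)` with points `(t', s)` on
either side of `t` where `V(t')` is below its average. Since `∫ V + ∫ A ≤ η`, multiplying the two
bounds and integrating over `J × J` gives `∫ (v - h)² ≤ 2 η ∫ (|∂ₜ v| + |∂ₛ v|) ≤ 4 η |Du|(Q*)`.
-/

open MeasureTheory Set
open scoped RealInnerProductSpace

noncomputable section

namespace MeasureTheory

section PosPart

variable {X : Type*} [MeasurableSpace X] {μ : Measure X} {f : X → ℝ}

theorem Integrable.posPart (hf : Integrable f μ) : Integrable (fun x => (f x)⁺) μ := hf.pos_part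

theorem Integrable.negPart (hf : Integrable f μ) : Integrable (fun x => (f x)⁻) μ := hf.neg_part

end PosPart

section Average

variable {X : Type*} [MeasurableSpace X] {μ : Measure X} {s : Set X} {g G : X → ℝ}

theorem setAverage_mono_ae (hg : IntegrableOn g s μ) (hG : IntegrableOn G s μ)
    (h : ∀ᵐ x ∂μ.restrict s, g x ≤ G x) : ⨍ x in s, g x ∂μ ≤ ⨍ x in s, G x ∂μ := by
  rw [setAverage_eq, setAverage_eq]
  exact smul_le_smul_of_nonneg_left (integral_mono_ae hg hG h) (by positivity)

theorem setAverage_nonneg_of_ae (h : ∀ᵐ x ∂μ.restrict s, 0 ≤ g x) : 0 ≤ ⨍ x in s, g x ∂μ := by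
  rw [setAverage_eq]
  exact smul_nonneg (by positivity) (integral_nonneg_of_ae h)

theorem abs_setAverage_sub_le {c : ℝ} (hμ : μ s ≠ 0) (hμ' : μ s ≠ ⊤)
    (hg : IntegrableOn g s μ) (hG : IntegrableOn G s μ)
    (hgG : ∀ᵐ x ∂μ.restrict s, |g x - c| ≤ G x) :
    |(⨍ x in s, g x ∂μ) - c| ≤ ⨍ x in s, G x ∂μ := by
  rw [← setAverage_const hμ hμ' c, setAverage_eq, setAverage_eq, setAverage_eq, ← smul_sub,
    ← integral_sub hg (integrableOn_const hμ'), smul_eq_mul, smul_eq_mul, abs_mul,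
    abs_of_nonneg (by positivity)]
  gcongr
  exact abs_integral_le_integral_abs.trans
    (integral_mono_of_nonneg (ae_of_all _ fun _ => abs_nonneg _) hG hgG)

theorem setAverage_sub (hg : IntegrableOn g s μ) (hG : IntegrableOn G s μ) :
    ⨍ x in s, (g x - G x) ∂μ = (⨍ x in s, g x ∂μ) - ⨍ x in s, G x ∂μ := by
  rw [setAverage_eq, setAverage_eq, setAverage_eq, integral_sub hg hG, smul_sub]

theorem setAverage_const_add {c : ℝ} (hμ : μ s ≠ 0) (hμ' : μ s ≠ ⊤) (hG : IntegrableOn G s μ) :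
    ⨍ x in s, (c + G x) ∂μ = c + ⨍ x in s, G x ∂μ := by
  have hc : Integrable (fun _ => c) (μ.restrict s) := integrableOn_const hμ'
  rw [setAverage_eq, integral_add hc hG, smul_add, ← setAverage_eq, ← setAverage_eq,
    setAverage_const hμ hμ']

end Average

section Rectangle

variable {X Y : Type*} [MeasurableSpace X] [MeasurableSpace Y] {μ : Measure X} {ν : Measure Y}
  [SFinite μ] [SFinite ν] {f : X × Y → ℝ} {s : Set X} {t : Set Y}

theorem IntegrableOn.prod_left_ae (hf : IntegrableOn f (s ×ˢ t) (μ.prod ν)) :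
    ∀ᵐ y ∂ν.restrict t, IntegrableOn (fun x => f (x, y)) s μ := by
  rw [IntegrableOn, ← Measure.prod_restrict] at hf
  exact hf.prod_left_ae

theorem IntegrableOn.prod_right_ae (hf : IntegrableOn f (s ×ˢ t) (μ.prod ν)) :
    ∀ᵐ x ∂μ.restrict s, IntegrableOn (fun y => f (x, y)) t ν := by
  rw [IntegrableOn, ← Measure.prod_restrict] at hf
  exact hf.prod_right_ae

theorem IntegrableOn.integral_prod_left (hf : IntegrableOn f (s ×ˢ t) (μ.prod ν)) :
    IntegrableOn (fun x => ∫ y in t, f (x, y) ∂ν) s μ := by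
  rw [IntegrableOn, ← Measure.prod_restrict] at hf
  exact hf.integral_prod_left

theorem IntegrableOn.integral_prod_right (hf : IntegrableOn f (s ×ˢ t) (μ.prod ν)) :
    IntegrableOn (fun y => ∫ x in s, f (x, y) ∂μ) t ν := by
  rw [IntegrableOn, ← Measure.prod_restrict] at hf
  exact hf.integral_prod_right

theorem setIntegral_prod_symm (hf : IntegrableOn f (s ×ˢ t) (μ.prod ν)) :
    ∫ z in s ×ˢ t, f z ∂μ.prod ν = ∫ y in t, ∫ x in s, f (x, y) ∂μ ∂ν := by
  rw [IntegrableOn, ← Measure.prod_restrict] at hf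
  rw [← Measure.prod_restrict, integral_prod_symm f hf]

theorem setIntegral_sq_le_mul_of_abs_le {F : X × Y → ℝ} {Φ : X → ℝ} {Θ : Y → ℝ}
    (hs : MeasurableSet s) (ht : MeasurableSet t)
    (hΦ : IntegrableOn Φ s μ) (hΘ : IntegrableOn Θ t ν)
    (hFΦ : ∀ᵐ x ∂μ.restrict s, ∀ y ∈ t, |F (x, y)| ≤ Φ x)
    (hFΘ : ∀ᵐ y ∂ν.restrict t, ∀ x ∈ s, |F (x, y)| ≤ Θ y) :
    ∫ p in s ×ˢ t, F p ^ 2 ∂μ.prod ν ≤ (∫ x in s, Φ x ∂μ) * ∫ y in t, Θ y ∂ν := by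
  rw [← Measure.prod_restrict, ← integral_prod_mul]
  refine integral_mono_of_nonneg (ae_of_all _ fun p => sq_nonneg _) (hΦ.mul_prod hΘ) ?_
  filter_upwards [Measure.quasiMeasurePreserving_fst.ae hFΦ,
    Measure.quasiMeasurePreserving_snd.ae hFΘ,
    Measure.quasiMeasurePreserving_fst.ae (ae_restrict_mem hs),
    Measure.quasiMeasurePreserving_snd.ae (ae_restrict_mem ht)] with p h₁ h₂ hx hy
  have h₁ := h₁ p.2 hy
  rw [← sq_abs, sq]
  exact mul_le_mul h₁ (h₂ p.1 hx) (abs_nonneg _) ((abs_nonneg _).trans h₁)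

end Rectangle

end MeasureTheory

section Interval

variable {f f' φ : ℝ → ℝ} {α β t₁ t₂ : ℝ}

theorem intervalIntegral_le_setIntegral_Icc (hφ : IntegrableOn φ (Icc α β)) (h0 : 0 ≤ φ)
    (ht₁ : t₁ ∈ Icc α β) (ht₂ : t₂ ∈ Icc α β) (h : t₁ ≤ t₂) :
    ∫ x in t₁..t₂, φ x ≤ ∫ x in Icc α β, φ x := by
  rw [intervalIntegral.integral_of_le h]
  exact setIntegral_mono_set hφ (ae_of_all _ h0)
    (Ioc_subset_Icc_self.trans (Icc_subset_Icc ht₁.1 ht₂.2)).eventuallyLE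

theorem sub_eq_intervalIntegral_of_hasDerivAt (hf : ∀ x ∈ Icc α β, HasDerivAt f (f' x) x)
    (hf' : IntegrableOn f' (Icc α β)) (ht₁ : t₁ ∈ Icc α β) (ht₂ : t₂ ∈ Icc α β) :
    f t₂ - f t₁ = ∫ x in t₁..t₂, f' x := by
  have hsub := uIcc_subset_Icc ht₁ ht₂
  exact (intervalIntegral.integral_eq_sub_of_hasDerivAt (fun x hx => hf x (hsub hx))
    (hf'.mono_set hsub).intervalIntegrable).symm

theorem sub_le_setIntegral_negPart_of_hasDerivAt (hf : ∀ x ∈ Icc α β, HasDerivAt f (f' x) x)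
    (hf' : IntegrableOn f' (Icc α β)) (ht₁ : t₁ ∈ Icc α β) (ht₂ : t₂ ∈ Icc α β) (h : t₁ ≤ t₂) :
    f t₁ - f t₂ ≤ ∫ x in Icc α β, (f' x)⁻ := by
  have hsub := uIcc_subset_Icc ht₁ ht₂
  calc f t₁ - f t₂ = ∫ x in t₁..t₂, -f' x := by
        rw [intervalIntegral.integral_neg, ← sub_eq_intervalIntegral_of_hasDerivAt hf hf' ht₁ ht₂,
          neg_sub]
    _ ≤ ∫ x in t₁..t₂, (f' x)⁻ :=
        intervalIntegral.integral_mono_on h (hf'.mono_set hsub).intervalIntegrable.neg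
          (IntegrableOn.intervalIntegrable (hf'.mono_set hsub).negPart) fun x _ => neg_le_negPart _
    _ ≤ ∫ x in Icc α β, (f' x)⁻ :=
        intervalIntegral_le_setIntegral_Icc hf'.negPart (fun x => negPart_nonneg _) ht₁ ht₂ h

theorem abs_sub_le_setIntegral_abs_of_hasDerivAt (hf : ∀ x ∈ Icc α β, HasDerivAt f (f' x) x)
    (hf' : IntegrableOn f' (Icc α β)) (ht₁ : t₁ ∈ Icc α β) (ht₂ : t₂ ∈ Icc α β) :
    |f t₂ - f t₁| ≤ ∫ x in Icc α β, |f' x| := by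
  wlog h : t₁ ≤ t₂ generalizing t₁ t₂
  · rw [abs_sub_comm]; exact this ht₂ ht₁ (le_of_not_ge h)
  rw [sub_eq_intervalIntegral_of_hasDerivAt hf hf' ht₁ ht₂]
  exact (intervalIntegral.abs_integral_le_integral_abs h).trans
    (intervalIntegral_le_setIntegral_Icc hf'.abs (fun x => abs_nonneg _) ht₁ ht₂ h)

theorem exists_mem_Icc_le_of_ae {P : ℝ → Prop} {a b : ℝ} (hab : a < b)
    (hsub : Icc a b ⊆ Icc α β) (hφ : IntegrableOn φ (Icc α β)) (h0 : 0 ≤ φ)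
    (hP : ∀ᵐ x ∂volume.restrict (Icc α β), P x) :
    ∃ x ∈ Icc a b, P x ∧ φ x ≤ (b - a)⁻¹ * ∫ x in Icc α β, φ x := by
  have hvol : volume (Icc a b) = ENNReal.ofReal (b - a) := Real.volume_Icc
  have hN : volume.restrict (Icc a b) {x | ¬(x ∈ Icc a b ∧ P x)} = 0 := by
    rw [← ae_iff]
    filter_upwards [ae_restrict_of_ae_restrict_of_subset hsub hP,
      ae_restrict_mem measurableSet_Icc] with x hPx hx using ⟨hx, hPx⟩
  obtain ⟨x, hx, hφx⟩ := exists_notMem_null_le_average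
    (by simp [hvol, hab]) (hφ.mono_set hsub) hN
  refine ⟨x, (not_not.1 hx).1, (not_not.1 hx).2, hφx.trans ?_⟩
  rw [average_eq, smul_eq_mul, measureReal_restrict_apply_univ, measureReal_def, hvol,
    ENNReal.toReal_ofReal (sub_nonneg.2 hab.le)]
  exact mul_le_mul_of_nonneg_left
    (setIntegral_mono_set hφ (ae_of_all _ h0) hsub.eventuallyLE) (by simp [hab.le])

end Interval

theorem HasFDerivAt.hasDerivAt_comp_prodMk_left {v : ℝ × ℝ → ℝ} {L : ℝ × ℝ →L[ℝ] ℝ} {t s : ℝ}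
    (hv : HasFDerivAt v L (t, s)) : HasDerivAt (fun τ => v (τ, s)) (L (1, 0)) t := by
  simpa [Function.comp_def] using
    hv.comp_hasDerivAt t ((hasDerivAt_id t).prodMk (hasDerivAt_const t s))

theorem HasFDerivAt.hasDerivAt_comp_prodMk_right {v : ℝ × ℝ → ℝ} {L : ℝ × ℝ →L[ℝ] ℝ} {t s : ℝ}
    (hv : HasFDerivAt v L (t, s)) : HasDerivAt (fun σ => v (t, σ)) (L (0, 1)) s := by
  simpa [Function.comp_def] using
    hv.comp_hasDerivAt s ((hasDerivAt_const s t).prodMk (hasDerivAt_id s))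

theorem setAverage_setIntegral_eq {f : ℝ × ℝ → ℝ} {s : Set ℝ} {γ δ : ℝ} (hγδ : γ ≤ δ)
    (hf : IntegrableOn f (s ×ˢ Icc γ δ)) :
    ⨍ σ in Icc γ δ, ∫ τ in s, f (τ, σ) = (δ - γ)⁻¹ * ∫ p in s ×ˢ Icc γ δ, f p := by
  rw [setAverage_eq, Real.volume_real_Icc_of_le hγδ, smul_eq_mul]
  exact congrArg _ (setIntegral_prod_symm hf).symm

section Profile

variable {v : ℝ × ℝ → ℝ} {Dv : ℝ × ℝ → ℝ × ℝ →L[ℝ] ℝ} {α β γ δ s t t₁ t₂ : ℝ}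

def addNegVariation (v : ℝ × ℝ → ℝ) (Dv : ℝ × ℝ → ℝ × ℝ →L[ℝ] ℝ) (α : ℝ) (p : ℝ × ℝ) : ℝ :=
  v p + ∫ τ in α..p.1, (Dv (τ, p.2) (1, 0))⁻

def monotoneProfile (v : ℝ × ℝ → ℝ) (Dv : ℝ × ℝ → ℝ × ℝ →L[ℝ] ℝ) (α : ℝ) (J : Set ℝ)
    (t : ℝ) : ℝ :=
  ⨍ σ in J, addNegVariation v Dv α (t, σ)

theorem addNegVariation_sub_addNegVariation (hv : ∀ p ∈ Icc α β ×ˢ Icc γ δ, HasFDerivAt v (Dv p) p)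
    (hs : s ∈ Icc γ δ) (has : IntegrableOn (fun τ => Dv (τ, s) (1, 0)) (Icc α β))
    (ht₁ : t₁ ∈ Icc α β) (ht₂ : t₂ ∈ Icc α β) :
    addNegVariation v Dv α (t₂, s) - addNegVariation v Dv α (t₁, s) =
      ∫ τ in t₁..t₂, (Dv (τ, s) (1, 0))⁺ := by
  have hα : α ∈ Icc α β := ⟨le_rfl, ht₁.1.trans ht₁.2⟩
  have hint : ∀ {a b}, a ∈ Icc α β → b ∈ Icc α β →
      IntervalIntegrable (fun τ => Dv (τ, s) (1, 0)) volume a b := fun ha hb =>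
    (has.mono_set (uIcc_subset_Icc ha hb)).intervalIntegrable
  have hint' : ∀ {a b}, a ∈ Icc α β → b ∈ Icc α β →
      IntervalIntegrable (fun τ => (Dv (τ, s) (1, 0))⁻) volume a b := fun ha hb =>
    IntegrableOn.intervalIntegrable (has.mono_set (uIcc_subset_Icc ha hb)).negPart
  have hFTC := sub_eq_intervalIntegral_of_hasDerivAt
    (fun τ hτ => (hv (τ, s) ⟨hτ, hs⟩).hasDerivAt_comp_prodMk_left) has ht₁ ht₂
  have hpos : ∫ τ in t₁..t₂, (Dv (τ, s) (1, 0))⁺ =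
      (∫ τ in t₁..t₂, Dv (τ, s) (1, 0)) + ∫ τ in t₁..t₂, (Dv (τ, s) (1, 0))⁻ := by
    rw [← intervalIntegral.integral_add (hint ht₁ ht₂) (hint' ht₁ ht₂)]
    exact intervalIntegral.integral_congr fun τ _ => eq_add_of_sub_eq (posPart_sub_negPart _)
  simp only [addNegVariation]
  rw [← intervalIntegral.integral_add_adjacent_intervals (hint' hα ht₁)
    (hint' ht₁ ht₂), hpos, ← hFTC]
  ring

theorem addNegVariation_sub_mem_Icc (hv : ∀ p ∈ Icc α β ×ˢ Icc γ δ, HasFDerivAt v (Dv p) p)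
    (hs : s ∈ Icc γ δ) (has : IntegrableOn (fun τ => Dv (τ, s) (1, 0)) (Icc α β))
    (ht₁ : t₁ ∈ Icc α β) (ht₂ : t₂ ∈ Icc α β) (h : t₁ ≤ t₂) :
    addNegVariation v Dv α (t₂, s) - addNegVariation v Dv α (t₁, s) ∈
      Icc 0 (∫ τ in Icc α β, (Dv (τ, s) (1, 0))⁺) := by
  rw [addNegVariation_sub_addNegVariation hv hs has ht₁ ht₂]
  exact ⟨intervalIntegral.integral_nonneg h fun _ _ => posPart_nonneg _,
    intervalIntegral_le_setIntegral_Icc has.posPart (fun _ => posPart_nonneg _) ht₁ ht₂ h⟩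

theorem integrableOn_addNegVariation (hv : ∀ p ∈ Icc α β ×ˢ Icc γ δ, HasFDerivAt v (Dv p) p)
    (ha : IntegrableOn (fun p => Dv p (1, 0)) (Icc α β ×ˢ Icc γ δ)) (ht : t ∈ Icc α β) :
    IntegrableOn (fun σ => addNegVariation v Dv α (t, σ)) (Icc γ δ) := by
  have hcont : ContinuousOn (fun σ => v (t, σ)) (Icc γ δ) := fun σ hσ =>
    (hv (t, σ) ⟨ht, hσ⟩).hasDerivAt_comp_prodMk_right.continuousAt.continuousWithinAt
  have hIoc : Ioc α t ×ˢ Icc γ δ ⊆ Icc α β ×ˢ Icc γ δ :=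
    prod_mono (Ioc_subset_Icc_self.trans (Icc_subset_Icc_right ht.2)) subset_rfl
  have hlift : IntegrableOn (fun σ => ∫ τ in Ioc α t, (Dv (τ, σ) (1, 0))⁻) (Icc γ δ) :=
    IntegrableOn.integral_prod_right (ha.mono_set hIoc).negPart
  simp only [addNegVariation, intervalIntegral.integral_of_le ht.1]
  exact hcont.integrableOn_Icc.add hlift

theorem monotoneProfile_sub (hv : ∀ p ∈ Icc α β ×ˢ Icc γ δ, HasFDerivAt v (Dv p) p)
    (ha : IntegrableOn (fun p => Dv p (1, 0)) (Icc α β ×ˢ Icc γ δ))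
    (ht₁ : t₁ ∈ Icc α β) (ht₂ : t₂ ∈ Icc α β) :
    monotoneProfile v Dv α (Icc γ δ) t₂ - monotoneProfile v Dv α (Icc γ δ) t₁ =
      ⨍ σ in Icc γ δ, (addNegVariation v Dv α (t₂, σ) - addNegVariation v Dv α (t₁, σ)) :=
  (setAverage_sub (integrableOn_addNegVariation hv ha ht₂)
    (integrableOn_addNegVariation hv ha ht₁)).symm

theorem monotoneOn_monotoneProfile (hv : ∀ p ∈ Icc α β ×ˢ Icc γ δ, HasFDerivAt v (Dv p) p)
    (ha : IntegrableOn (fun p => Dv p (1, 0)) (Icc α β ×ˢ Icc γ δ)) :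
    MonotoneOn (monotoneProfile v Dv α (Icc γ δ)) (Icc α β) := by
  intro t₁ ht₁ t₂ ht₂ h
  rw [← sub_nonneg, monotoneProfile_sub hv ha ht₁ ht₂]
  refine setAverage_nonneg_of_ae ?_
  filter_upwards [ha.prod_left_ae, ae_restrict_mem measurableSet_Icc] with σ hσa hσ
  exact (addNegVariation_sub_mem_Icc hv hσ hσa ht₁ ht₂ h).1

theorem monotoneProfile_sub_le (hv : ∀ p ∈ Icc α β ×ˢ Icc γ δ, HasFDerivAt v (Dv p) p)
    (ha : IntegrableOn (fun p => Dv p (1, 0)) (Icc α β ×ˢ Icc γ δ))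
    (ht₁ : t₁ ∈ Icc α β) (ht₂ : t₂ ∈ Icc α β) (h : t₁ ≤ t₂) :
    monotoneProfile v Dv α (Icc γ δ) t₂ - monotoneProfile v Dv α (Icc γ δ) t₁ ≤
      ⨍ σ in Icc γ δ, ∫ τ in Icc α β, (Dv (τ, σ) (1, 0))⁺ := by
  rw [monotoneProfile_sub hv ha ht₁ ht₂]
  refine setAverage_mono_ae ((integrableOn_addNegVariation hv ha ht₂).sub
    (integrableOn_addNegVariation hv ha ht₁))
    (IntegrableOn.integral_prod_right ha.posPart) ?_
  filter_upwards [ha.prod_left_ae, ae_restrict_mem measurableSet_Icc] with σ hσa hσ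
  exact (addNegVariation_sub_mem_Icc hv hσ hσa ht₁ ht₂ h).2

theorem abs_sub_monotoneProfile_le (hv : ∀ p ∈ Icc α β ×ˢ Icc γ δ, HasFDerivAt v (Dv p) p)
    (ha : IntegrableOn (fun p => Dv p (1, 0)) (Icc α β ×ˢ Icc γ δ)) (hγδ : γ < δ)
    (ht : t ∈ Icc α β) (hbt : IntegrableOn (fun σ => Dv (t, σ) (0, 1)) (Icc γ δ))
    (hs : s ∈ Icc γ δ) :
    |v (t, s) - monotoneProfile v Dv α (Icc γ δ) t| ≤
      (∫ σ in Icc γ δ, |Dv (t, σ) (0, 1)|) +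
        ⨍ σ in Icc γ δ, ∫ τ in Icc α β, (Dv (τ, σ) (1, 0))⁻ := by
  have hJ : volume (Icc γ δ) ≠ 0 := by simp [hγδ]
  have hJ' : volume (Icc γ δ) ≠ ⊤ := by simp
  have hA : IntegrableOn (fun σ => ∫ τ in Icc α β, (Dv (τ, σ) (1, 0))⁻) (Icc γ δ) :=
    IntegrableOn.integral_prod_right ha.negPart
  rw [abs_sub_comm, ← setAverage_const_add hJ hJ' hA]
  refine abs_setAverage_sub_le hJ hJ' (integrableOn_addNegVariation hv ha ht)
    ((integrableOn_const hJ').add hA) ?_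
  filter_upwards [ha.prod_left_ae, ae_restrict_mem measurableSet_Icc] with σ hσa hσ
  have hvert := abs_sub_le_setIntegral_abs_of_hasDerivAt
    (fun σ hσ => (hv (t, σ) ⟨ht, hσ⟩).hasDerivAt_comp_prodMk_right) hbt hs hσ
  have hlift := intervalIntegral_le_setIntegral_Icc hσa.negPart (fun _ => negPart_nonneg _)
    ⟨le_rfl, ht.1.trans ht.2⟩ ht ht.1
  have hlift₀ : 0 ≤ ∫ τ in α..t, (Dv (τ, σ) (1, 0))⁻ :=
    intervalIntegral.integral_nonneg ht.1 fun _ _ => negPart_nonneg _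
  simp only [addNegVariation]
  rw [add_sub_right_comm]
  exact (abs_add_le _ _).trans (add_le_add hvert ((abs_of_nonneg hlift₀).trans_le hlift))

theorem sub_monotoneProfile_le (hv : ∀ p ∈ Icc α β ×ˢ Icc γ δ, HasFDerivAt v (Dv p) p)
    (ha : IntegrableOn (fun p => Dv p (1, 0)) (Icc α β ×ˢ Icc γ δ))
    (hs : s ∈ Icc γ δ) (has : IntegrableOn (fun τ => Dv (τ, s) (1, 0)) (Icc α β))
    (ht₁ : t₁ ∈ Icc α β) (ht₂ : t₂ ∈ Icc α β) (h : t₁ ≤ t₂) :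
    v (t₁, s) - monotoneProfile v Dv α (Icc γ δ) t₁ ≤
      v (t₂, s) - monotoneProfile v Dv α (Icc γ δ) t₂ + (∫ τ in Icc α β, (Dv (τ, s) (1, 0))⁻) +
        ⨍ σ in Icc γ δ, ∫ τ in Icc α β, (Dv (τ, σ) (1, 0))⁺ := by
  have hhor := sub_le_setIntegral_negPart_of_hasDerivAt
    (fun τ hτ => (hv (τ, s) ⟨hτ, hs⟩).hasDerivAt_comp_prodMk_left) has ht₁ ht₂ h
  have hprof := monotoneProfile_sub_le hv ha ht₁ ht₂ h
  linarith

theorem abs_sub_monotoneProfile_le_of_Icc_subset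
    (hv : ∀ p ∈ Icc α β ×ˢ Icc γ δ, HasFDerivAt v (Dv p) p)
    (ha : IntegrableOn (fun p => Dv p (1, 0)) (Icc α β ×ˢ Icc γ δ))
    (hb : IntegrableOn (fun p => Dv p (0, 1)) (Icc α β ×ˢ Icc γ δ)) (hγδ : γ < δ)
    {m : ℝ} (hm : 0 < m) (htm : Icc (t - m) (t + m) ⊆ Icc α β)
    (hs : s ∈ Icc γ δ) (has : IntegrableOn (fun τ => Dv (τ, s) (1, 0)) (Icc α β)) :
    |v (t, s) - monotoneProfile v Dv α (Icc γ δ) t| ≤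
      (∫ τ in Icc α β, (Dv (τ, s) (1, 0))⁻) +
        ((⨍ σ in Icc γ δ, ∫ τ in Icc α β, (Dv (τ, σ) (1, 0))⁺) +
          (⨍ σ in Icc γ δ, ∫ τ in Icc α β, (Dv (τ, σ) (1, 0))⁻) +
          m⁻¹ * ∫ τ in Icc α β, ∫ σ in Icc γ δ, |Dv (τ, σ) (0, 1)|) := by
  have hV : IntegrableOn (fun τ => ∫ σ in Icc γ δ, |Dv (τ, σ) (0, 1)|) (Icc α β) :=
    IntegrableOn.integral_prod_left hb.abs
  have hV₀ : 0 ≤ fun τ => ∫ σ in Icc γ δ, |Dv (τ, σ) (0, 1)| :=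
    fun τ => integral_nonneg fun _ => abs_nonneg _
  have ht : t ∈ Icc α β := htm ⟨by linarith, by linarith⟩
  -- The comparison along the horizontal line through `(t, s)` is one-sided, so a vertical line of
  -- small variation is needed on each side of `t`.
  obtain ⟨tHi, htHi, hbHi, hVHi⟩ := exists_mem_Icc_le_of_ae (by linarith : t < t + m)
    ((Icc_subset_Icc_left (by linarith)).trans htm) hV hV₀ hb.prod_right_ae
  obtain ⟨tLo, htLo, hbLo, hVLo⟩ := exists_mem_Icc_le_of_ae (by linarith : t - m < t)
    ((Icc_subset_Icc_right (by linarith)).trans htm) hV hV₀ hb.prod_right_ae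
  rw [add_sub_cancel_left] at hVHi
  rw [sub_sub_cancel] at hVLo
  have hHi : tHi ∈ Icc α β := htm ⟨by linarith [htHi.1], htHi.2⟩
  have hLo : tLo ∈ Icc α β := htm ⟨htLo.1, by linarith [htLo.2]⟩
  have up := sub_monotoneProfile_le hv ha hs has ht hHi htHi.1
  have down := sub_monotoneProfile_le hv ha hs has hLo ht htLo.2
  have devHi := abs_le.1 (abs_sub_monotoneProfile_le hv ha hγδ hHi hbHi hs)
  have devLo := abs_le.1 (abs_sub_monotoneProfile_le hv ha hγδ hLo hbLo hs)
  exact abs_le.2 ⟨by linarith, by linarith⟩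

theorem abs_monotoneProfile_sub_le (hv : ∀ p ∈ Icc α β ×ˢ Icc γ δ, HasFDerivAt v (Dv p) p)
    (ha : IntegrableOn (fun p => Dv p (1, 0)) (Icc α β ×ˢ Icc γ δ))
    (ht₁ : t₁ ∈ Icc α β) (ht₂ : t₂ ∈ Icc α β) :
    |monotoneProfile v Dv α (Icc γ δ) t₁ - monotoneProfile v Dv α (Icc γ δ) t₂| ≤
      ⨍ σ in Icc γ δ, ∫ τ in Icc α β, (Dv (τ, σ) (1, 0))⁺ := by
  have hαβ : α ≤ β := ht₁.1.trans ht₁.2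
  have hα : α ∈ Icc α β := ⟨le_rfl, hαβ⟩
  have hβ : β ∈ Icc α β := ⟨hαβ, le_rfl⟩
  have hmono := monotoneOn_monotoneProfile hv ha (γ := γ) (δ := δ)
  have hosc := monotoneProfile_sub_le hv ha hα hβ hαβ
  have h₁ := hmono hα ht₁ ht₁.1
  have h₁' := hmono ht₁ hβ ht₁.2
  have h₂ := hmono hα ht₂ ht₂.1
  have h₂' := hmono ht₂ hβ ht₂.2
  exact abs_le.2 ⟨by linarith, by linarith⟩

theorem setIntegral_vertical_bound_le
    (ha : IntegrableOn (fun p => Dv p (1, 0)) (Icc α β ×ˢ Icc γ δ))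
    (hb : IntegrableOn (fun p => Dv p (0, 1)) (Icc α β ×ˢ Icc γ δ)) (hJI : Icc γ δ ⊆ Icc α β) :
    ∫ t in Icc γ δ, ((∫ σ in Icc γ δ, |Dv (t, σ) (0, 1)|) +
        ⨍ σ in Icc γ δ, ∫ τ in Icc α β, (Dv (τ, σ) (1, 0))⁻) ≤
      ∫ p in Icc α β ×ˢ Icc γ δ, (|Dv p (0, 1)| + (Dv p (1, 0))⁻) := by
  have hV : IntegrableOn (fun τ => ∫ σ in Icc γ δ, |Dv (τ, σ) (0, 1)|) (Icc α β) :=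
    IntegrableOn.integral_prod_left hb.abs
  have fubini_V : ∫ τ in Icc α β, ∫ σ in Icc γ δ, |Dv (τ, σ) (0, 1)| =
      ∫ p in Icc α β ×ˢ Icc γ δ, |Dv p (0, 1)| :=
    (setIntegral_prod (fun p => |Dv p (0, 1)|) hb.abs).symm
  have fubini_A : ∫ σ in Icc γ δ, ∫ τ in Icc α β, (Dv (τ, σ) (1, 0))⁻ =
      ∫ p in Icc α β ×ˢ Icc γ δ, (Dv p (1, 0))⁻ :=
    (setIntegral_prod_symm ha.negPart).symm
  rw [integral_add (hV.mono_set hJI) (integrableOn_const measure_Icc_lt_top.ne),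
    setIntegral_const, measure_smul_setAverage _ measure_Icc_lt_top.ne, fubini_A,
    integral_add hb.abs ha.negPart, ← fubini_V]
  exact add_le_add_left (setIntegral_mono_set hV
    (ae_of_all _ fun _ => integral_nonneg fun _ => abs_nonneg _) hJI.eventuallyLE) _

theorem setIntegral_horizontal_bound_le
    (ha : IntegrableOn (fun p => Dv p (1, 0)) (Icc α β ×ˢ Icc γ δ))
    (hb : IntegrableOn (fun p => Dv p (0, 1)) (Icc α β ×ˢ Icc γ δ)) (hγδ : γ < δ) {m : ℝ}
    (hm : 0 < m) (hwidth : δ - γ ≤ 2 * m) :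
    ∫ s in Icc γ δ, ((∫ τ in Icc α β, (Dv (τ, s) (1, 0))⁻) +
        ((⨍ σ in Icc γ δ, ∫ τ in Icc α β, (Dv (τ, σ) (1, 0))⁺) +
          (⨍ σ in Icc γ δ, ∫ τ in Icc α β, (Dv (τ, σ) (1, 0))⁻) +
          m⁻¹ * ∫ τ in Icc α β, ∫ σ in Icc γ δ, |Dv (τ, σ) (0, 1)|)) ≤
      2 * ∫ p in Icc α β ×ˢ Icc γ δ, (|Dv p (1, 0)| + |Dv p (0, 1)|) := by
  have hJ : volume (Icc γ δ) ≠ ⊤ := measure_Icc_lt_top.ne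
  have hA : IntegrableOn (fun σ => ∫ τ in Icc α β, (Dv (τ, σ) (1, 0))⁻) (Icc γ δ) :=
    IntegrableOn.integral_prod_right ha.negPart
  have fubini_V : ∫ τ in Icc α β, ∫ σ in Icc γ δ, |Dv (τ, σ) (0, 1)| =
      ∫ p in Icc α β ×ˢ Icc γ δ, |Dv p (0, 1)| :=
    (setIntegral_prod (fun p => |Dv p (0, 1)|) hb.abs).symm
  have fubini_A : ∫ σ in Icc γ δ, ∫ τ in Icc α β, (Dv (τ, σ) (1, 0))⁻ =
      ∫ p in Icc α β ×ˢ Icc γ δ, (Dv p (1, 0))⁻ :=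
    (setIntegral_prod_symm ha.negPart).symm
  have fubini_P : ∫ σ in Icc γ δ, ∫ τ in Icc α β, (Dv (τ, σ) (1, 0))⁺ =
      ∫ p in Icc α β ×ˢ Icc γ δ, (Dv p (1, 0))⁺ :=
    (setIntegral_prod_symm ha.posPart).symm
  have habs : ∫ p in Icc α β ×ˢ Icc γ δ, |Dv p (1, 0)| =
      (∫ p in Icc α β ×ˢ Icc γ δ, (Dv p (1, 0))⁺) + ∫ p in Icc α β ×ˢ Icc γ δ, (Dv p (1, 0))⁻ := by
    rw [← integral_add ha.posPart ha.negPart]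
    simp only [posPart_add_negPart]
  have hratio : (δ - γ) * (m⁻¹ * ∫ p in Icc α β ×ˢ Icc γ δ, |Dv p (0, 1)|) ≤
      2 * ∫ p in Icc α β ×ˢ Icc γ δ, |Dv p (0, 1)| := by
    rw [← mul_assoc]
    exact mul_le_mul_of_nonneg_right ((mul_inv_le_iff₀ hm).2 hwidth)
      (integral_nonneg fun _ => abs_nonneg _)
  have hpos : 0 ≤ ∫ p in Icc α β ×ˢ Icc γ δ, (Dv p (1, 0))⁺ :=
    integral_nonneg fun _ => posPart_nonneg _
  rw [integral_add hA (integrableOn_const hJ), setIntegral_const, smul_add, smul_add,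
    measure_smul_setAverage _ hJ, measure_smul_setAverage _ hJ, smul_eq_mul,
    Real.volume_real_Icc_of_le hγδ.le, fubini_A, fubini_P, fubini_V, integral_add ha.abs hb.abs,
    habs]
  linarith

theorem setIntegral_sq_sub_monotoneProfile_le
    (hv : ∀ p ∈ Icc α β ×ˢ Icc γ δ, HasFDerivAt v (Dv p) p)
    (ha : IntegrableOn (fun p => Dv p (1, 0)) (Icc α β ×ˢ Icc γ δ))
    (hb : IntegrableOn (fun p => Dv p (0, 1)) (Icc α β ×ˢ Icc γ δ)) (hγδ : γ < δ) {m : ℝ}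
    (hαγ : α ≤ γ - m) (hδβ : δ + m ≤ β) (hwidth : δ - γ ≤ 2 * m) :
    ∫ p in Icc γ δ ×ˢ Icc γ δ, (v p - monotoneProfile v Dv α (Icc γ δ) p.1) ^ 2 ≤
      2 * (∫ p in Icc α β ×ˢ Icc γ δ, (|Dv p (0, 1)| + (Dv p (1, 0))⁻)) *
        ∫ p in Icc α β ×ˢ Icc γ δ, (|Dv p (1, 0)| + |Dv p (0, 1)|) := by
  have hm : 0 < m := by linarith
  have hJI : Icc γ δ ⊆ Icc α β := Icc_subset_Icc (by linarith) (by linarith)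
  have hJ : volume (Icc γ δ) ≠ ⊤ := measure_Icc_lt_top.ne
  have hvert : ∀ᵐ t ∂volume.restrict (Icc γ δ), ∀ s ∈ Icc γ δ,
      |v (t, s) - monotoneProfile v Dv α (Icc γ δ) t| ≤ (∫ σ in Icc γ δ, |Dv (t, σ) (0, 1)|) +
        ⨍ σ in Icc γ δ, ∫ τ in Icc α β, (Dv (τ, σ) (1, 0))⁻ := by
    filter_upwards [ae_restrict_of_ae_restrict_of_subset hJI hb.prod_right_ae,
      ae_restrict_mem measurableSet_Icc] with t hbt ht s hs
      using abs_sub_monotoneProfile_le hv ha hγδ (hJI ht) hbt hs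
  have hhor : ∀ᵐ s ∂volume.restrict (Icc γ δ), ∀ t ∈ Icc γ δ,
      |v (t, s) - monotoneProfile v Dv α (Icc γ δ) t| ≤
        (∫ τ in Icc α β, (Dv (τ, s) (1, 0))⁻) +
          ((⨍ σ in Icc γ δ, ∫ τ in Icc α β, (Dv (τ, σ) (1, 0))⁺) +
            (⨍ σ in Icc γ δ, ∫ τ in Icc α β, (Dv (τ, σ) (1, 0))⁻) +
            m⁻¹ * ∫ τ in Icc α β, ∫ σ in Icc γ δ, |Dv (τ, σ) (0, 1)|) := by
    filter_upwards [ha.prod_left_ae, ae_restrict_mem measurableSet_Icc] with s has hs t ht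
    exact abs_sub_monotoneProfile_le_of_Icc_subset hv ha hb hγδ hm
      (Icc_subset_Icc (by linarith [ht.1]) (by linarith [ht.2])) hs has
  have hV : IntegrableOn (fun τ => ∫ σ in Icc γ δ, |Dv (τ, σ) (0, 1)|) (Icc α β) :=
    IntegrableOn.integral_prod_left hb.abs
  have hA : IntegrableOn (fun σ => ∫ τ in Icc α β, (Dv (τ, σ) (1, 0))⁻) (Icc γ δ) :=
    IntegrableOn.integral_prod_right ha.negPart
  calc _ ≤ _ := setIntegral_sq_le_mul_of_abs_le measurableSet_Icc measurableSet_Icc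
        ((hV.mono_set hJI).add (integrableOn_const hJ)) (hA.add (integrableOn_const hJ))
        hvert hhor
    _ ≤ _ := mul_le_mul_of_nonneg (setIntegral_vertical_bound_le ha hb hJI)
        (setIntegral_horizontal_bound_le ha hb hγδ hm hwidth)
        (integral_nonneg fun _ => add_nonneg (integral_nonneg fun _ => abs_nonneg _)
          (setAverage_nonneg_of_ae
            (ae_of_all _ fun _ => integral_nonneg fun _ => negPart_nonneg _)))
        (mul_nonneg zero_le_two
          (integral_nonneg fun _ => add_nonneg (abs_nonneg _) (abs_nonneg _)))
    _ = _ := by ring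

theorem exists_monotone_sq_integral_le
    (hv : ∀ p ∈ Icc α β ×ˢ Icc γ δ, HasFDerivAt v (Dv p) p)
    (ha : IntegrableOn (fun p => Dv p (1, 0)) (Icc α β ×ˢ Icc γ δ))
    (hb : IntegrableOn (fun p => Dv p (0, 1)) (Icc α β ×ˢ Icc γ δ)) (hγδ : γ < δ) {m : ℝ}
    (hαγ : α ≤ γ - m) (hδβ : δ + m ≤ β) (hwidth : δ - γ ≤ 2 * m) :
    ∃ h : ℝ → ℝ, Monotone h ∧
      ∫ p in Icc γ δ ×ˢ Icc γ δ, (v p - h p.1) ^ 2 ≤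
        2 * (∫ p in Icc α β ×ˢ Icc γ δ, (|Dv p (0, 1)| + (Dv p (1, 0))⁻)) *
          ∫ p in Icc α β ×ˢ Icc γ δ, (|Dv p (1, 0)| + |Dv p (0, 1)|) ∧
      ∃ hbar : ℝ, ∀ t ∈ Icc γ δ,
        |h t - hbar| ≤ (δ - γ)⁻¹ * ∫ p in Icc α β ×ˢ Icc γ δ, |Dv p (1, 0)| := by
  set H := monotoneProfile v Dv α (Icc γ δ)
  have hJI : Icc γ δ ⊆ Icc α β := Icc_subset_Icc (by linarith) (by linarith)
  have hH : MonotoneOn H (Icc α β) := monotoneOn_monotoneProfile hv ha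
  obtain ⟨h, hmono, hHh⟩ := hH.exists_monotone_extension
    (bddBelow_Icc.mono hH.image_Icc_subset) (bddAbove_Icc.mono hH.image_Icc_subset)
  have hγ : γ ∈ Icc γ δ := ⟨le_rfl, hγδ.le⟩
  refine ⟨h, hmono, ?_, H γ, fun t ht => ?_⟩
  · refine le_of_eq_of_le (setIntegral_congr_fun (measurableSet_Icc.prod measurableSet_Icc)
      fun p hp => ?_) (setIntegral_sq_sub_monotoneProfile_le hv ha hb hγδ hαγ hδβ hwidth)
    exact congrArg (fun y => (v p - y) ^ 2) (hHh (hJI hp.1)).symm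
  · have hpos : ∫ p in Icc α β ×ˢ Icc γ δ, (Dv p (1, 0))⁺ ≤
        ∫ p in Icc α β ×ˢ Icc γ δ, |Dv p (1, 0)| :=
      setIntegral_mono ha.posPart ha.abs fun p =>
        (le_add_of_nonneg_right (negPart_nonneg _)).trans_eq (posPart_add_negPart _)
    rw [← hHh (hJI ht)]
    calc |H t - H γ| ≤ ⨍ σ in Icc γ δ, ∫ τ in Icc α β, (Dv (τ, σ) (1, 0))⁺ :=
          abs_monotoneProfile_sub_le hv ha (hJI ht) (hJI hγ)
      _ ≤ _ := by
          rw [setAverage_setIntegral_eq hγδ.le ha.posPart]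
          exact mul_le_mul_of_nonneg_left hpos (inv_nonneg.2 (sub_nonneg.2 hγδ.le))

end Profile

theorem integrableOn_apply_of_hasFDerivAt {E : Type*} [NormedAddCommGroup E] [NormedSpace ℝ E]
    [MeasurableSpace E] [OpensMeasurableSpace E] {μ : Measure E} {u : E → ℝ}
    {Du : E → E →L[ℝ] ℝ} {s : Set E} (hs : MeasurableSet s)
    (hder : ∀ x ∈ s, HasFDerivAt u (Du x) x) (hint : IntegrableOn (fun x => ‖Du x‖) s μ) (e : E) :
    IntegrableOn (fun x => Du x e) s μ := by
  refine Integrable.mono' (hint.mul_const ‖e‖) ?_ (ae_of_all _ fun x => (Du x).le_opNorm e)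
  exact (measurable_fderiv_apply_const ℝ u e).aestronglyMeasurable.congr
    ((ae_restrict_mem hs).mono fun x hx => congrArg (· e) (hder x hx).fderiv)

section Coordinates

-- `Q*_ν = centeredRect ν ν^⊥ ℓ (ℓ / 2)` and `Q_ν = centeredRect ν ν^⊥ (ℓ / 2) (ℓ / 2)`.
def centeredRect {E : Type*} [NormedAddCommGroup E] [InnerProductSpace ℝ E] (ν νp : E)
    (a b : ℝ) : Set E :=
  {x | |⟪x, ν⟫| ≤ a ∧ |⟪x, νp⟫| ≤ b}

variable {E : Type*} [NormedAddCommGroup E] [InnerProductSpace ℝ E] [MeasurableSpace E]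
  [BorelSpace E]

theorem measurableSet_centeredRect (ν νp : E) (a b : ℝ) :
    MeasurableSet (centeredRect ν νp a b) :=
  ((isClosed_le (f := fun x => |⟪x, ν⟫|) (by fun_prop) continuous_const).inter
    (isClosed_le (f := fun x => |⟪x, νp⟫|) (by fun_prop) continuous_const)).measurableSet

variable [FiniteDimensional ℝ E]

theorem exists_measurePreserving_coords (hE : Module.finrank ℝ E = 2) {ν νp : E}
    (hν : ‖ν‖ = 1) (hνp : ‖νp‖ = 1) (h : ⟪ν, νp⟫ = 0) :
    ∃ Ψ : (ℝ × ℝ) ≃ᵐ E, MeasurePreserving Ψ ∧ ∀ p, Ψ p = p.1 • ν + p.2 • νp := by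
  have hon : Orthonormal ℝ ![ν, νp] := by
    rw [orthonormal_iff_ite]
    intro i j
    fin_cases i <;> fin_cases j <;> simp [hν, hνp, h, real_inner_comm]
  let B : OrthonormalBasis (Fin 2) ℝ E :=
    (basisOfOrthonormalOfCardEqFinrank hon (by simp [hE])).toOrthonormalBasis
      (by rwa [coe_basisOfOrthonormalOfCardEqFinrank])
  have hB : ⇑B = ![ν, νp] := by
    simp [B, Module.Basis.coe_toOrthonormalBasis, coe_basisOfOrthonormalOfCardEqFinrank]
  refine ⟨MeasurableEquiv.finTwoArrow.symm.trans
    ((MeasurableEquiv.toLp 2 _).trans B.repr.symm.toHomeomorph.toMeasurableEquiv), ?_, ?_⟩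
  · exact B.measurePreserving_repr_symm.comp
      ((PiLp.volume_preserving_toLp _).comp (volume_preserving_finTwoArrow ℝ).symm)
  · intro p
    simp [← B.sum_repr_symm, hB, MeasurableEquiv.finTwoArrow]

theorem exists_monotone_sq_integral_le_of_orthonormal (hE : Module.finrank ℝ E = 2) {ℓ : ℝ}
    (hℓ : 0 < ℓ) {ν νp : E} (hν : ‖ν‖ = 1) (hνp : ‖νp‖ = 1) (h : ⟪ν, νp⟫ = 0) {u : E → ℝ}
    {Du : E → E →L[ℝ] ℝ} (hder : ∀ x ∈ centeredRect ν νp ℓ (ℓ / 2), HasFDerivAt u (Du x) x)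
    (hint : IntegrableOn (fun x => ‖Du x‖) (centeredRect ν νp ℓ (ℓ / 2))) :
    ∃ h : ℝ → ℝ, Monotone h ∧
      ∫ x in centeredRect ν νp (ℓ / 2) (ℓ / 2), (u x - h ⟪x, ν⟫) ^ 2 ≤
        2 * (∫ x in centeredRect ν νp ℓ (ℓ / 2), (|Du x νp| + (Du x ν)⁻)) *
          ∫ x in centeredRect ν νp ℓ (ℓ / 2), (|Du x ν| + |Du x νp|) ∧
      ∃ hbar : ℝ, ∀ x ∈ centeredRect ν νp (ℓ / 2) (ℓ / 2),
        |h ⟪x, ν⟫ - hbar| ≤ ℓ⁻¹ * ∫ x in centeredRect ν νp ℓ (ℓ / 2), |Du x ν| := by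
  obtain ⟨Ψ, hΨ, hΨp⟩ := exists_measurePreserving_coords hE hν hνp h
  have hcoord : ∀ p, ⟪Ψ p, ν⟫ = p.1 ∧ ⟪Ψ p, νp⟫ = p.2 := fun p => by
    simp [hΨp, inner_add_left, real_inner_smul_left, hν, hνp, h,
      real_inner_comm ν νp]
  have hpre : ∀ a b, Ψ ⁻¹' centeredRect ν νp a b = Icc (-a) a ×ˢ Icc (-b) b := fun a b => by
    ext p; simp only [centeredRect, mem_preimage, mem_ofPred_eq, hcoord, abs_le, mem_prod, mem_Icc]
  have transfer : ∀ a b (g : E → ℝ),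
      ∫ x in centeredRect ν νp a b, g x = ∫ p in Icc (-a) a ×ˢ Icc (-b) b, g (Ψ p) := by
    intro a b g
    rw [← hpre, hΨ.setIntegral_preimage_emb Ψ.measurableEmbedding]
  let L : ℝ × ℝ →L[ℝ] E :=
    (ContinuousLinearMap.fst ℝ ℝ ℝ).smulRight ν + (ContinuousLinearMap.snd ℝ ℝ ℝ).smulRight νp
  have hΨL : ⇑Ψ = ⇑L := funext fun p => by simp [hΨp, L]
  have hv : ∀ p ∈ Icc (-ℓ) ℓ ×ˢ Icc (-(ℓ / 2)) (ℓ / 2),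
      HasFDerivAt (u ∘ Ψ) ((Du (Ψ p)).comp L) p := fun p hp => by
    rw [← hpre] at hp
    exact (hder _ hp).comp p (hΨL ▸ L.hasFDerivAt)
  have hint' : ∀ e, IntegrableOn (fun p => Du (Ψ p) e) (Icc (-ℓ) ℓ ×ˢ Icc (-(ℓ / 2)) (ℓ / 2)) :=
    fun e => hpre ℓ (ℓ / 2) ▸ (hΨ.integrableOn_comp_preimage Ψ.measurableEmbedding).2
      (integrableOn_apply_of_hasFDerivAt (measurableSet_centeredRect ν νp ℓ (ℓ / 2)) hder hint e)
  have hL : L (1, 0) = ν ∧ L (0, 1) = νp := by simp [L]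
  obtain ⟨g, hmono, hsq, hbar, hbar_le⟩ := exists_monotone_sq_integral_le hv
    (by simpa [hL] using hint' ν) (by simpa [hL] using hint' νp) (by linarith)
    (m := ℓ / 2) (by linarith) (by linarith) (by linarith)
  refine ⟨g, hmono, ?_, hbar, fun x hx => ?_⟩
  · simp only [transfer, (hcoord _).1]
    simpa [hL] using hsq
  · rw [transfer, show ℓ⁻¹ = (ℓ / 2 - -(ℓ / 2))⁻¹ by ring_nf]
    simpa [hL] using hbar_le ⟪x, ν⟫ (abs_le.1 hx.1)

end Coordinates

theorem stmt13 :
    ∃ C > 0, ∀ (ℓ : ℝ), 0 < ℓ →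
      ∀ (ν νp : EuclideanSpace ℝ (Fin 2)), ‖ν‖ = 1 → ‖νp‖ = 1 → ⟪ν, νp⟫ = 0 →
      ∀ (u : EuclideanSpace ℝ (Fin 2) → ℝ)
        (Du : EuclideanSpace ℝ (Fin 2) → (EuclideanSpace ℝ (Fin 2) →L[ℝ] ℝ)),
      let Qstar : Set (EuclideanSpace ℝ (Fin 2)) :=
        {x | |⟪x, ν⟫| ≤ ℓ ∧ |⟪x, νp⟫| ≤ ℓ / 2}
      let Qnu : Set (EuclideanSpace ℝ (Fin 2)) :=
        {x | |⟪x, ν⟫| ≤ ℓ / 2 ∧ |⟪x, νp⟫| ≤ ℓ / 2}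
      (∀ x ∈ Qstar, HasFDerivAt u (Du x) x) →
      Integrable (fun x => ‖Du x‖) (volume.restrict Qstar) →
      ∃ h : ℝ → ℝ, Monotone h ∧
        (∫ x in Qnu, (u x - h ⟪x, ν⟫) ^ 2) ≤
          C * (∫ x in Qstar, (|Du x νp| + max (-(Du x ν)) 0)) * ∫ x in Qstar, ‖Du x‖ ∧
        ∃ hbar : ℝ, ∀ x ∈ Qnu, |h ⟪x, ν⟫ - hbar| ≤ ℓ⁻¹ * ∫ x in Qstar, ‖Du x‖ := by
  refine ⟨4, by norm_num, ?_⟩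
  intro ℓ hℓ ν νp hν hνp hννp u Du Qstar Qnu hder hint
  obtain ⟨h, hmono, hsq, hbar, hbar_le⟩ := exists_monotone_sq_integral_le_of_orthonormal
    finrank_euclideanSpace_fin hℓ hν hνp hννp hder hint
  have hQ : MeasurableSet Qstar := measurableSet_centeredRect ν νp ℓ (ℓ / 2)
  have hDν := integrableOn_apply_of_hasFDerivAt hQ hder hint ν
  have hDνp := integrableOn_apply_of_hasFDerivAt hQ hder hint νp
  have hunit : ∀ x e, ‖e‖ = 1 → |Du x e| ≤ ‖Du x‖ := fun x e he =>
    ((Du x).le_opNorm e).trans_eq (by rw [he, mul_one])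
  have hsum : ∫ x in Qstar, (|Du x ν| + |Du x νp|) ≤ 2 * ∫ x in Qstar, ‖Du x‖ := by
    rw [← integral_const_mul]
    exact setIntegral_mono (hDν.abs.add hDνp.abs) (hint.const_mul 2) fun x => by
      linarith [hunit x ν hν, hunit x νp hνp]
  refine ⟨h, hmono, hsq.trans ?_, hbar, fun x hx => (hbar_le x hx).trans ?_⟩
  · calc _ ≤ 2 * (∫ x in Qstar, (|Du x νp| + (Du x ν)⁻)) * (2 * ∫ x in Qstar, ‖Du x‖) :=
          mul_le_mul_of_nonneg_left hsum (by positivity)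
      _ = 4 * (∫ x in Qstar, (|Du x νp| + (Du x ν)⁻)) * ∫ x in Qstar, ‖Du x‖ := by ring
  · exact mul_le_mul_of_nonneg_left (setIntegral_mono hDν.abs hint fun x => hunit x ν hν)
      (inv_nonneg.2 hℓ.le)
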